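/- Let K be a pathwise connected poset and o ∈ K. The assignment sending a C*-net bundle (A,j)_K to its holonomy dynamical system (A_o, π₁ᵒ(K), j_*) is a correspondence that is bijective up to isomorphism between C*-net bundles over K and C*-dynamical systems with group π₁ᵒ(K); in particular, it extends to an equivalence between the category of C*-net bundles over K (with morphisms over the identity of K) and the category of C*-dynamical systems with group π₁ᵒ(K) (with morphisms having identity group part). -/

import Mathlib

noncomputable section

universe u v w u' v' w' u'' v'' w''

namespace AQFT

/-! ### Simplices and paths in a poset -/

structure Simplex1 (K : Type u) [PartialOrder K] : Type u where
  supp : K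
  d0 : K
  d1 : K
  le0 : d0 ≤ supp
  le1 : d1 ≤ supp

namespace Simplex1

variable {K : Type u} [PartialOrder K]

def op (s : Simplex1 K) : Simplex1 K := ⟨s.supp, s.d1, s.d0, s.le1, s.le0⟩

def deg (a : K) : Simplex1 K := ⟨a, a, a, le_rfl, le_rfl⟩

def map {L : Type u'} [PartialOrder L] (f : K →o L) (s : Simplex1 K) : Simplex1 L :=
  ⟨f s.supp, f s.d0, f s.d1, f.monotone s.le0, f.monotone s.le1⟩

end Simplex1

structure Simplex2 (K : Type u) [PartialOrder K] : Type u where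
  supp : K
  d0 : Simplex1 K
  d1 : Simplex1 K
  d2 : Simplex1 K
  le0 : d0.supp ≤ supp
  le1 : d1.supp ≤ supp
  le2 : d2.supp ≤ supp
  h00 : d0.d0 = d1.d0
  h11 : d1.d1 = d2.d1
  h10 : d0.d1 = d2.d0

inductive SPath (K : Type u) [PartialOrder K] : K → K → Type u
  | nil (a : K) : SPath K a a
  | cons {a b c : K} (p : SPath K a b) (s : Simplex1 K) (h1 : s.d1 = b) (h0 : s.d0 = c) :
      SPath K a c

namespace SPath

variable {K : Type u} [PartialOrder K]

/-- The path consisting of a single 1-simplex. -/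
def single {a b : K} (s : Simplex1 K) (h1 : s.d1 = a) (h0 : s.d0 = b) : SPath K a b :=
  .cons (.nil a) s h1 h0

/-- Composition of paths: first traverse `p`, then `q`. -/
def comp {a b : K} (p : SPath K a b) : {c : K} → SPath K b c → SPath K a c
  | _, .nil _ => p
  | _, .cons q s h1 h0 => .cons (p.comp q) s h1 h0

/-- The opposite (reverse) of a path. -/
def reverse {a : K} : {b : K} → SPath K a b → SPath K b a
  | _, .nil _ => .nil a
  | _, .cons p s h1 h0 => (single s.op h0 h1).comp p.reverse

@[simp] theorem comp_nil {a b : K} (p : SPath K a b) : p.comp (.nil b) = p := rfl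

@[simp] theorem nil_comp {a b : K} (p : SPath K a b) : (SPath.nil a).comp p = p := by
  induction p with
  | nil => rfl
  | cons p s h1 h0 ih =>
      show SPath.cons ((SPath.nil _).comp p) s h1 h0 = _
      rw [ih]

theorem comp_assoc {a b c d : K} (p : SPath K a b) (q : SPath K b c) (r : SPath K c d) :
    (p.comp q).comp r = p.comp (q.comp r) := by
  induction r with
  | nil => rfl
  | cons r s h1 h0 ih =>
      show SPath.cons ((p.comp q).comp r) s h1 h0 = SPath.cons (p.comp (q.comp r)) s h1 h0
      rw [ih]

/-- All 1-simplices of the path have support `≤ o`. -/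
def SuppLE (o : K) {a : K} : {b : K} → SPath K a b → Prop
  | _, .nil _ => True
  | _, .cons p s _ _ => SuppLE o p ∧ s.supp ≤ o

/-- All supports and faces of the path belong to `P`. -/
def MemAll (P : Set K) {a : K} : {b : K} → SPath K a b → Prop
  | _, .nil _ => True
  | _, .cons p s _ _ => MemAll P p ∧ s.supp ∈ P ∧ s.d0 ∈ P ∧ s.d1 ∈ P

theorem SuppLE.comp {o : K} {a b c : K} {p : SPath K a b} {q : SPath K b c}
    (hp : SuppLE o p) (hq : SuppLE o q) : SuppLE o (p.comp q) := by
  induction q with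
  | nil => exact hp
  | cons q s h1 h0 ih => exact ⟨ih hq.1, hq.2⟩

theorem SuppLE.reverse {o : K} {a b : K} {p : SPath K a b} (hp : SuppLE o p) :
    SuppLE o p.reverse := by
  induction p with
  | nil => trivial
  | cons p s h1 h0 ih => exact SuppLE.comp ⟨trivial, hp.2⟩ (ih hp.1)

/-- Mapping paths along a monotone map. -/
def map {L : Type u'} [PartialOrder L] (f : K →o L) {a : K} :
    {b : K} → SPath K a b → SPath L (f a) (f b)
  | _, .nil _ => .nil (f a)
  | _, .cons p s h1 h0 => .cons (map f p) (s.map f) (congrArg f h1) (congrArg f h0)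

/-- The path of the nerve 1-simplex associated with an inclusion `o ≤ a`. -/
def nervePath {o a : K} (h : o ≤ a) : SPath K o a :=
  single ⟨a, a, o, le_rfl, h⟩ rfl rfl

/-! ### Homotopy of paths -/

inductive Homotopic : {a b : K} → SPath K a b → SPath K a b → Prop
  | refl {a b : K} (p : SPath K a b) : Homotopic p p
  | symm {a b : K} {p q : SPath K a b} : Homotopic p q → Homotopic q p
  | trans {a b : K} {p q r : SPath K a b} : Homotopic p q → Homotopic q r → Homotopic p r
  | comp_congr {a b c : K} {p p' : SPath K a b} {q q' : SPath K b c} :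
      Homotopic p p' → Homotopic q q' → Homotopic (p.comp q) (p'.comp q')
  | degen {a : K} (s : Simplex1 K) (h0 : s.d0 = a) (h1 : s.d1 = a) (hs : s.supp = a) :
      Homotopic (SPath.nil a) (single s h1 h0)
  | triangle {a b : K} (c : Simplex2 K) (h1 : c.d2.d1 = a) (h0 : c.d0.d0 = b) :
      Homotopic ((single c.d2 h1 rfl).comp (single c.d0 c.h10 h0))
        (single c.d1 (c.h11.trans h1) (c.h00.symm.trans h0))

theorem single_comp_op {a b : K} (s : Simplex1 K) (h1 : s.d1 = a) (h0 : s.d0 = b) :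
    Homotopic ((single s h1 h0).comp (single s.op h0 h1)) (SPath.nil a) := by
  subst h1; subst h0
  have ht := Homotopic.triangle
    (⟨s.supp, s.op, Simplex1.deg s.d1, s, le_rfl, s.le1, le_rfl, rfl, rfl, rfl⟩ : Simplex2 K)
    rfl rfl
  have hd := Homotopic.degen (K := K) (Simplex1.deg s.d1) rfl rfl rfl
  exact ht.trans hd.symm

theorem comp_reverse_self {a b : K} (p : SPath K a b) :
    Homotopic (p.comp p.reverse) (SPath.nil a) := by
  induction p with
  | nil => exact .refl _
  | cons p s h1 h0 ih =>
      show Homotopic ((p.comp (single s h1 h0)).comp ((single s.op h0 h1).comp p.reverse)) _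
      rw [comp_assoc, ← comp_assoc (single s h1 h0)]
      have h2 : Homotopic (((single s h1 h0).comp (single s.op h0 h1)).comp p.reverse)
          p.reverse := by
        have h3 := Homotopic.comp_congr (single_comp_op s h1 h0) (Homotopic.refl p.reverse)
        rwa [nil_comp] at h3
      exact (Homotopic.comp_congr (Homotopic.refl p) h2).trans ih

theorem reverse_comp_self {a b : K} (p : SPath K a b) :
    Homotopic (p.reverse.comp p) (SPath.nil b) := by
  induction p with
  | nil => exact .refl _
  | cons p s h1 h0 ih =>
      show Homotopic (((single s.op h0 h1).comp p.reverse).comp (p.comp (single s h1 h0))) _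
      rw [comp_assoc, ← comp_assoc p.reverse]
      have h2 : Homotopic ((p.reverse.comp p).comp (single s h1 h0)) (single s h1 h0) := by
        have h3 := Homotopic.comp_congr ih (Homotopic.refl (single s h1 h0))
        rwa [nil_comp] at h3
      have h4 : Homotopic ((single s.op h0 h1).comp ((p.reverse.comp p).comp (single s h1 h0)))
          ((single s.op h0 h1).comp (single s h1 h0)) :=
        Homotopic.comp_congr (Homotopic.refl _) h2
      exact h4.trans (single_comp_op s.op h0 h1)

theorem Homotopic.reverse_congr {a b : K} {p q : SPath K a b} (h : Homotopic p q) :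
    Homotopic p.reverse q.reverse := by
  have e1 : Homotopic p.reverse (p.reverse.comp (q.comp q.reverse)) :=
    Homotopic.comp_congr (Homotopic.refl p.reverse) (comp_reverse_self q).symm
  have e2 : Homotopic (p.reverse.comp (q.comp q.reverse)) ((p.reverse.comp p).comp q.reverse) := by
    rw [comp_assoc]
    exact Homotopic.comp_congr (Homotopic.refl _)
      (Homotopic.comp_congr h.symm (Homotopic.refl _))
  have e3 : Homotopic ((p.reverse.comp p).comp q.reverse) q.reverse := by
    have h3 := Homotopic.comp_congr (reverse_comp_self p) (Homotopic.refl q.reverse)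
    rwa [nil_comp] at h3
  exact (e1.trans e2).trans e3

end SPath

/-! ### The fundamental group of a poset -/

instance homotopySetoid (K : Type u) [PartialOrder K] (o : K) : Setoid (SPath K o o) where
  r := SPath.Homotopic
  iseqv := ⟨fun p => .refl p, fun h => h.symm, fun h h' => h.trans h'⟩

def Pi1 (K : Type u) [PartialOrder K] (o : K) : Type u := Quotient (homotopySetoid K o)

namespace Pi1

variable {K : Type u} [PartialOrder K] {o : K}

def mk (p : SPath K o o) : Pi1 K o := Quotient.mk _ p

instance : One (Pi1 K o) := ⟨mk (SPath.nil o)⟩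

instance : Mul (Pi1 K o) :=
  ⟨Quotient.map₂ (fun p q => q.comp p)
    (fun _ _ hp _ _ hq => SPath.Homotopic.comp_congr hq hp)⟩

instance : Inv (Pi1 K o) :=
  ⟨Quotient.map SPath.reverse (fun _ _ h => h.reverse_congr)⟩

instance : Group (Pi1 K o) where
  mul_assoc x y z := by
    refine Quotient.inductionOn₃ x y z ?_
    intro p q r
    show mk (r.comp (q.comp p)) = mk ((r.comp q).comp p)
    rw [SPath.comp_assoc]
  one_mul x := Quotient.inductionOn x fun p => rfl
  mul_one x := Quotient.inductionOn x fun p => congrArg mk (SPath.nil_comp p)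
  inv_mul_cancel x := Quotient.inductionOn x fun p => Quotient.sound (SPath.comp_reverse_self p)

end Pi1

/-! ### Nets of C*-algebras over a poset -/

open scoped ComplexOrder

variable {K : Type u} [PartialOrder K]

structure CStarNet (K : Type u) [PartialOrder K] where
  fib : K → Type v
  [cstar : ∀ o, CStarAlgebra (fib o)]
  incl : ∀ ⦃a o : K⦄, a ≤ o → (fib a →⋆ₐ[ℂ] fib o)
  incl_injective : ∀ ⦃a o : K⦄ (h : a ≤ o), Function.Injective (incl h)
  incl_comp : ∀ ⦃e a o : K⦄ (h1 : e ≤ a) (h2 : a ≤ o) (x : fib e),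
      incl h2 (incl h1 x) = incl (h1.trans h2) x

attribute [instance] CStarNet.cstar

/-- A C*-net bundle: all the inclusion maps are isomorphisms. -/
def IsCStarNetBundle (N : CStarNet.{u, v} K) : Prop :=
  ∀ ⦃a o : K⦄ (h : a ≤ o), Function.Bijective (N.incl h)

/-- Morphisms of nets over (possibly) different posets, over the poset map `f`. -/
def IsNetMorphism {K : Type u} {S : Type u'} [PartialOrder K] [PartialOrder S]
    (N : CStarNet.{u, v} K) (M : CStarNet.{u', v'} S) (f : K →o S)
    (φ : ∀ o : K, N.fib o →⋆ₐ[ℂ] M.fib (f o)) : Prop :=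
  ∀ ⦃a o : K⦄ (h : a ≤ o) (x : N.fib a), φ o (N.incl h x) = M.incl (f.monotone h) (φ a x)

/-- Morphisms of nets over the same poset (over the identity of the poset). -/
def IsNetMorphismOver (N : CStarNet.{u, v} K) (M : CStarNet.{u, v'} K)
    (φ : ∀ o : K, N.fib o →⋆ₐ[ℂ] M.fib o) : Prop :=
  ∀ ⦃a o : K⦄ (h : a ≤ o) (x : N.fib a), φ o (N.incl h x) = M.incl h (φ a x)

namespace CStarNet

def fibCast (N : CStarNet.{u, v} K) {a b : K} (h : a = b) : N.fib a ≃⋆ₐ[ℂ] N.fib b := by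
  subst h; exact StarAlgEquiv.refl ℂ _

/-- The isomorphism determined by an inclusion map of a C*-net bundle. -/
def holEquiv (N : CStarNet.{u, v} K) (hN : IsCStarNetBundle N) ⦃a o : K⦄ (h : a ≤ o) :
    N.fib a ≃⋆ₐ[ℂ] N.fib o :=
  StarAlgEquiv.ofBijective (N.incl h) (hN h)

/-- The 1-cocycle `j_b` associated with a 1-simplex `b` of the poset. -/
def hol1 (N : CStarNet.{u, v} K) (hN : IsCStarNetBundle N) (s : Simplex1 K) :
    N.fib s.d1 ≃⋆ₐ[ℂ] N.fib s.d0 :=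
  (N.holEquiv hN s.le1).trans (N.holEquiv hN s.le0).symm

/-- The extension `j_p` of the 1-cocycle from 1-simplices to paths. -/
def holPath (N : CStarNet.{u, v} K) (hN : IsCStarNetBundle N) {a : K} :
    {b : K} → SPath K a b → (N.fib a ≃⋆ₐ[ℂ] N.fib b)
  | _, .nil _ => StarAlgEquiv.refl ℂ _
  | _, .cons p s h1 h0 =>
      (holPath N hN p).trans (((N.fibCast h1.symm).trans (N.hol1 hN s)).trans (N.fibCast h0))

end CStarNet

/-- A net is trivial if it is isomorphic to a constant net bundle. -/
def IsTrivialNet (N : CStarNet.{u, v} K) : Prop :=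
  ∀ o₀ : K, ∃ τ : ∀ a, N.fib a ≃⋆ₐ[ℂ] N.fib o₀,
    ∀ ⦃a o : K⦄ (h : a ≤ o) (x : N.fib a), τ o (N.incl h x) = τ a x

/-- `(NB, ε)` is an enveloping net bundle of the net `N`. -/
def IsEnvelope (N : CStarNet.{u, v} K) (NB : CStarNet.{u, max u v} K)
    (ε : ∀ o, N.fib o →⋆ₐ[ℂ] NB.fib o) : Prop :=
  IsCStarNetBundle NB ∧ IsNetMorphismOver N NB ε ∧
    ∀ (M : CStarNet.{u, max u v} K), IsCStarNetBundle M →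
      ∀ ψ : ∀ o, N.fib o →⋆ₐ[ℂ] M.fib o, IsNetMorphismOver N M ψ →
        ∃! ψu : ∀ o, NB.fib o →⋆ₐ[ℂ] M.fib o,
          IsNetMorphismOver NB M ψu ∧ ∀ o x, ψu o (ε o x) = ψ o x

/-- The net `N` is nondegenerate w.r.t. the enveloping net bundle `NB`. -/
def IsNondegenerate (NB : CStarNet.{u, v'} K) : Prop :=
  ∀ o : K, Nontrivial (NB.fib o)

/-! ### States -/

/-- A state on a unital C*-algebra. -/
structure CStarAlgState (A : Type v) [CStarAlgebra A] where
  lin : A →ₗ[ℂ] ℂ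
  map_one : lin 1 = 1
  pos : ∀ a : A, 0 ≤ lin (star a * a)

/-- A state on a net of C*-algebras. -/
structure NetState (N : CStarNet.{u, v} K) where
  st : ∀ o, CStarAlgState (N.fib o)
  compat : ∀ ⦃o a : K⦄ (h : o ≤ a) (x : N.fib o), (st a).lin (N.incl h x) = (st o).lin x

/-! ### Representations -/

structure NetRep (N : CStarNet.{u, v} K) where
  H : K → Type w
  [nacg : ∀ o, NormedAddCommGroup (H o)]
  [ips : ∀ o, InnerProductSpace ℂ (H o)]
  [cpl : ∀ o, CompleteSpace (H o)]
  rep : ∀ o, N.fib o →⋆ₐ[ℂ] (H o →L[ℂ] H o)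
  U : ∀ ⦃o a : K⦄, o ≤ a → (H o ≃ₗᵢ[ℂ] H a)
  intertwine : ∀ ⦃o a : K⦄ (h : o ≤ a) (x : N.fib o) (v : H o),
      U h (rep o x v) = rep a (N.incl h x) (U h v)
  U_comp : ∀ ⦃o a e : K⦄ (h1 : o ≤ a) (h2 : a ≤ e) (v : H o),
      U h2 (U h1 v) = U (h1.trans h2) v

attribute [instance] NetRep.nacg NetRep.ips NetRep.cpl

namespace NetRep

variable {N : CStarNet.{u, v} K}

def hCast (R : NetRep.{u, v, w} N) {a b : K} (h : a = b) : R.H a ≃ₗᵢ[ℂ] R.H b := by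
  subst h; exact LinearIsometryEquiv.refl ℂ _

/-- The unitary `U_b` associated with a 1-simplex `b`. -/
def U1 (R : NetRep.{u, v, w} N) (s : Simplex1 K) : R.H s.d1 ≃ₗᵢ[ℂ] R.H s.d0 :=
  (R.U s.le1).trans (R.U s.le0).symm

/-- The unitary `U_p` associated with a path `p`. -/
def Upath (R : NetRep.{u, v, w} N) {a : K} : {b : K} → SPath K a b → (R.H a ≃ₗᵢ[ℂ] R.H b)
  | _, .nil _ => LinearIsometryEquiv.refl ℂ _
  | _, .cons p s h1 h0 =>
      (Upath R p).trans (((R.hCast h1.symm).trans (R.U1 s)).trans (R.hCast h0))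

/-- A representation is faithful if all the `π_o` are injective. -/
def Faithful (R : NetRep.{u, v, w} N) : Prop := ∀ o, Function.Injective (R.rep o)

/-- A representation vanishes if all the `π_o` are zero. -/
def Vanishes (R : NetRep.{u, v, w} N) : Prop := ∀ (o) (x : N.fib o), R.rep o x = 0

/-- Quasi (topologically) trivial representation: the loop unitaries commute with the
representation of the corresponding fibre. -/
def QuasiTrivial (R : NetRep.{u, v, w} N) : Prop :=
  ∀ (o : K) (p : SPath K o o) (x : N.fib o) (v : R.H o),
    R.Upath p (R.rep o x v) = R.rep o x (R.Upath p v)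

/-- Unitary equivalence of representations. -/
def Equiv (R : NetRep.{u, v, w} N) (R' : NetRep.{u, v, w'} N) : Prop :=
  ∃ T : ∀ o, R.H o ≃ₗᵢ[ℂ] R'.H o,
    (∀ (o) (x : N.fib o) (v : R.H o), T o (R.rep o x v) = R'.rep o x (T o v)) ∧
    (∀ ⦃o a : K⦄ (h : o ≤ a) (v : R.H o), T a (R.U h v) = R'.U h (T o v))

end NetRep

/-- The representation of `N` obtained by composing a representation of `NB` with
a morphism `ε : N → NB` of nets over `K`. -/
def NetRep.ofEnvelope {N : CStarNet.{u, v} K} {NB : CStarNet.{u, v'} K}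
    (ε : ∀ o, N.fib o →⋆ₐ[ℂ] NB.fib o) (hε : IsNetMorphismOver N NB ε)
    (R : NetRep.{u, v', w} NB) : NetRep.{u, v, w} N where
  H := R.H
  rep o := (R.rep o).comp (ε o)
  U := R.U
  intertwine := by
    intro o a h x v
    show R.U h (R.rep o (ε o x) v) = R.rep a (ε a (N.incl h x)) (R.U h v)
    rw [hε h x]
    exact R.intertwine h (ε o x) v
  U_comp := R.U_comp

/-- Covariant representations of the holonomy dynamical system of a C*-net bundle,
with the action of the fundamental group presented at the level of loops. -/
structure CovRep (N : CStarNet.{u, v} K) (hN : IsCStarNetBundle N) (o : K) where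
  H : Type w
  [nacg : NormedAddCommGroup H]
  [ips : InnerProductSpace ℂ H]
  [cpl : CompleteSpace H]
  eta : N.fib o →⋆ₐ[ℂ] (H →L[ℂ] H)
  V : SPath K o o → (H ≃ₗᵢ[ℂ] H)
  V_hom : ∀ p q : SPath K o o, SPath.Homotopic p q → V p = V q
  V_mul : ∀ p q : SPath K o o, V (p.comp q) = (V p).trans (V q)
  cov : ∀ (p : SPath K o o) (x : N.fib o) (v : H),
      eta (N.holPath hN p x) (V p v) = V p (eta x v)

attribute [instance] CovRep.nacg CovRep.ips CovRep.cpl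

/-- Equivalence of covariant representations. -/
def CovRep.Equiv {N : CStarNet.{u, v} K} {hN : IsCStarNetBundle N} {o : K}
    (C : CovRep.{u, v, w} N hN o) (C' : CovRep.{u, v, w'} N hN o) : Prop :=
  ∃ W : C.H ≃ₗᵢ[ℂ] C'.H,
    (∀ (x : N.fib o) (v : C.H), W (C.eta x v) = C'.eta x (W v)) ∧
    (∀ (p : SPath K o o) (v : C.H), W (C.V p v) = C'.V p (W v))

/-- A representation of a single C*-algebra on a Hilbert space. -/
structure AlgRep (A : Type v) [CStarAlgebra A] where
  H : Type w
  [nacg : NormedAddCommGroup H]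
  [ips : InnerProductSpace ℂ H]
  [cpl : CompleteSpace H]
  rho : A →⋆ₐ[ℂ] (H →L[ℂ] H)

attribute [instance] AlgRep.nacg AlgRep.ips AlgRep.cpl

/-- A Hilbert space representation (on a single Hilbert space) of the restriction of
a net of C*-algebras to a subset `P` of the poset. -/
structure SubNetHSRep (N : CStarNet.{u, v} K) (P : Set K) where
  H : Type w
  [nacg : NormedAddCommGroup H]
  [ips : InnerProductSpace ℂ H]
  [cpl : CompleteSpace H]
  rep : ∀ o ∈ P, N.fib o →⋆ₐ[ℂ] (H →L[ℂ] H)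
  compat : ∀ ⦃a o : K⦄ (ha : a ∈ P) (ho : o ∈ P) (h : a ≤ o) (x : N.fib a),
      rep o ho (N.incl h x) = rep a ha x

attribute [instance] SubNetHSRep.nacg SubNetHSRep.ips SubNetHSRep.cpl

/-! ### Amenability -/

/-- The space `ℓ∞(G)` of bounded real-valued functions on `G`. -/
def BddFuns (G : Type w) : Submodule ℝ (G → ℝ) where
  carrier := {f | ∃ C, ∀ g, |f g| ≤ C}
  add_mem' := by
    rintro f g ⟨C, hC⟩ ⟨D, hD⟩
    exact ⟨C + D, fun x => (abs_add_le _ _).trans (add_le_add (hC x) (hD x))⟩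
  zero_mem' := ⟨0, by simp⟩
  smul_mem' := by
    rintro c f ⟨C, hC⟩
    refine ⟨|c| * C, fun x => ?_⟩
    have : |c • f x| = |c| * |f x| := by simp [abs_mul]
    calc |(c • f) x| = |c| * |f x| := by simpa using this
      _ ≤ |c| * C := mul_le_mul_of_nonneg_left (hC x) (abs_nonneg c)

def BddFuns.const (G : Type w) (r : ℝ) : BddFuns G :=
  ⟨fun _ => r, ⟨|r|, fun _ => le_rfl⟩⟩

def BddFuns.rtrans {G : Type w} [Group G] (f : BddFuns G) (h : G) : BddFuns G :=
  ⟨fun g => (f : G → ℝ) (g * h), by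
    obtain ⟨C, hC⟩ := f.2
    exact ⟨C, fun g => hC (g * h)⟩⟩

/-- A right invariant mean on `ℓ∞(G)`. -/
structure RightInvariantMean (G : Type w) [Group G] where
  mean : BddFuns G →ₗ[ℝ] ℝ
  nonneg : ∀ f : BddFuns G, (∀ g, 0 ≤ (f : G → ℝ) g) → 0 ≤ mean f
  normalized : mean (BddFuns.const G 1) = 1
  rightInv : ∀ (f : BddFuns G) (h : G), mean (BddFuns.rtrans f h) = mean f

/-- Amenability of a (discrete) group. -/
def IsAmenable (G : Type w) [Group G] : Prop := Nonempty (RightInvariantMean G)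

/-! ### Covariant nets -/

/-- A `G`-covariant structure on a net of C*-algebras, where `G` acts on the poset `K`
by order preserving bijections. -/
structure CovariantNet {G : Type w} [Group G] [MulAction G K]
    (hord : ∀ (g : G) (a b : K), a ≤ b → g • a ≤ g • b) (N : CStarNet.{u, v} K) where
  act : ∀ (g : G) (o : K), N.fib o ≃⋆ₐ[ℂ] N.fib (g • o)
  act_mul : ∀ (g h : G) (o : K) (x : N.fib o),
      N.fibCast (mul_smul h g o) (act (h * g) o x) = act h (g • o) (act g o x)
  act_incl : ∀ (g : G) ⦃a o : K⦄ (hao : a ≤ o) (x : N.fib a),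
      act g o (N.incl hao x) = N.incl (hord g a o hao) (act g a x)

/-- A `G`-invariant state of a `G`-covariant net. -/
def NetState.Invariant {G : Type w} [Group G] [MulAction G K]
    {hord : ∀ (g : G) (a b : K), a ≤ b → g • a ≤ g • b} {N : CStarNet.{u, v} K}
    (α : CovariantNet hord N) (ω : NetState N) : Prop :=
  ∀ (g : G) (o : K) (x : N.fib o), (ω.st (g • o)).lin (α.act g o x) = (ω.st o).lin x

/-! ### The generalized Čech cocycle -/

/-- A 1-simplex of the simplicial set `Σ°_*(K)`: two vertices and a nonempty support
`F` lying below both of them. -/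
structure CechSimplex1 (K : Type u) [PartialOrder K] : Type u where
  F : Set K
  hne : F.Nonempty
  src : K
  tgt : K
  hsrc : ∀ a ∈ F, a ≤ src
  htgt : ∀ a ∈ F, a ≤ tgt

def CechSimplex1.swap (s : CechSimplex1 K) : CechSimplex1 K :=
  ⟨s.F, s.hne, s.tgt, s.src, s.htgt, s.hsrc⟩

/-- `A^F_o`: the C*-subalgebra of the fibre over `o` generated by the images of the
fibres over the elements of `F`. -/
def CStarNet.fibGen (N : CStarNet.{u, v} K) (F : Set K) (o : K) (hF : ∀ a ∈ F, a ≤ o) :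
    StarSubalgebra ℂ (N.fib o) :=
  (StarAlgebra.adjoin ℂ (⋃ a, ⋃ h : a ∈ F, Set.range (N.incl (hF a h)))).topologicalClosure

theorem CStarNet.mem_fibGen (N : CStarNet.{u, v} K) {F : Set K} {o : K}
    (hF : ∀ a ∈ F, a ≤ o) {a : K} (ha : a ∈ F) (x : N.fib a) :
    N.incl (hF a ha) x ∈ N.fibGen F o hF :=
  StarSubalgebra.le_topologicalClosure _
    (StarAlgebra.subset_adjoin ℂ _
      (Set.mem_iUnion.2 ⟨a, Set.mem_iUnion.2 ⟨ha, Set.mem_range_self x⟩⟩))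

/-- A generalized Čech cocycle of the net `N` defined over the collection `D` of
1-simplices of `Σ°_*(K)`. -/
structure CechCocycle (N : CStarNet.{u, v} K) (D : Set (CechSimplex1 K)) where
  zeta : ∀ s ∈ D, (N.fibGen s.F s.src s.hsrc ≃⋆ₐ[ℂ] N.fibGen s.F s.tgt s.htgt)
  compat : ∀ (s : CechSimplex1 K) (hs : s ∈ D) ⦃a : K⦄ (ha : a ∈ s.F) (x : N.fib a),
      (zeta s hs ⟨N.incl (s.hsrc a ha) x, N.mem_fibGen s.hsrc ha x⟩ : N.fib s.tgt)
        = N.incl (s.htgt a ha) x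

/-- The domain of the Čech cocycle of a net: the union of all the domains over which
a Čech cocycle of the net exists. -/
def CechDomain (N : CStarNet.{u, v} K) : Set (CechSimplex1 K) :=
  {s | ∃ D : Set (CechSimplex1 K), Nonempty (CechCocycle N D) ∧ s ∈ D}


/-- A representation of a C*-net bundle and a covariant representation of its holonomy
dynamical system correspond to each other. -/
def MatchesCov {N : CStarNet.{u, v} K} {hN : IsCStarNetBundle N} {o : K}
    (R : NetRep.{u, v, w} N) (C : CovRep.{u, v, w'} N hN o) : Prop :=
  ∃ W : R.H o ≃ₗᵢ[ℂ] C.H,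
    (∀ (x : N.fib o) (v : R.H o), W (R.rep o x v) = C.eta x (W v)) ∧
    (∀ (p : SPath K o o) (v : R.H o), W (R.Upath p v) = C.V p (W v))

/-!
Transport along paths in a net bundle is homotopy invariant: both generating homotopies take
place below a single element `c`, and below `c` every transport becomes trivial after including
into the fibre over `c`. Hence a morphism of net bundles is determined by its component at `o`;
conversely an equivariant `η` extends to the fibre over `a` by conjugating it with the transport
along a path from `o` to `a`, and equivariance makes this independent of the path.

For essential surjectivity fix paths `γ a` from `o` to every `a`. Closing a path `p : a → b` to
the loop `γ a * p * (γ b)⁻¹` is functorial into `π₁ᵒ(K)`, so letting `a ≤ b` act on the constant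
fibre `R` by `ρ` of the loop of its nerve simplex gives a net bundle whose holonomy is `ρ`,
conjugated by `ρ [γ o]`.
-/

namespace SPath

theorem Homotopic.comp_reverse_comp {a b c : K} (p : SPath K a b) (q : SPath K c b) :
    Homotopic ((p.comp q.reverse).comp q) p := by
  rw [comp_assoc]
  simpa using Homotopic.comp_congr (Homotopic.refl p) (reverse_comp_self q)

theorem Homotopic.reverse_comp_comp {a b c : K} (p : SPath K a b) (q : SPath K b c) :
    Homotopic (p.reverse.comp (p.comp q)) q := by
  rw [← comp_assoc]
  simpa using Homotopic.comp_congr (reverse_comp_self p) (Homotopic.refl q)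

theorem Homotopic.single_comp_nervePath (s : Simplex1 K) :
    Homotopic ((single s rfl rfl).comp (nervePath s.le0)) (nervePath s.le1) :=
  Homotopic.triangle
    ⟨s.supp, ⟨s.supp, s.supp, s.d0, le_rfl, s.le0⟩, ⟨s.supp, s.supp, s.d1, le_rfl, s.le1⟩,
      s, le_rfl, le_rfl, le_rfl, rfl, rfl, rfl⟩ rfl rfl

theorem Homotopic.nervePath_comp_nervePath {a b c : K} (h₁ : a ≤ b) (h₂ : b ≤ c) :
    Homotopic ((nervePath h₁).comp (nervePath h₂)) (nervePath (h₁.trans h₂)) :=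
  Homotopic.triangle
    ⟨c, ⟨c, c, b, le_rfl, h₂⟩, ⟨c, c, a, le_rfl, h₁.trans h₂⟩, ⟨b, b, a, le_rfl, h₁⟩,
      le_rfl, le_rfl, h₂, rfl, rfl, rfl⟩ rfl rfl

theorem suppLE_single {a b c : K} (s : Simplex1 K) (h1 : s.d1 = a) (h0 : s.d0 = b)
    (hs : s.supp ≤ c) : (single s h1 h0).SuppLE c :=
  ⟨trivial, hs⟩

end SPath

namespace CStarNet

variable (N : CStarNet.{u, v} K)

theorem incl_self {a : K} (h : a ≤ a) (x : N.fib a) : N.incl h x = x :=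
  N.incl_injective h (N.incl_comp h h x)

variable (hN : IsCStarNetBundle N)

theorem incl_hol1 (s : Simplex1 K) {c : K} (hs : s.supp ≤ c) (x : N.fib s.d1) :
    N.incl (s.le0.trans hs) (N.hol1 hN s x) = N.incl (s.le1.trans hs) x := by
  rw [← N.incl_comp s.le0 hs, ← N.incl_comp s.le1 hs]
  exact congrArg (N.incl hs) ((N.holEquiv hN s.le0).apply_symm_apply _)

theorem holPath_comp {a b c : K} (p : SPath K a b) (q : SPath K b c) (x : N.fib a) :
    N.holPath hN (p.comp q) x = N.holPath hN q (N.holPath hN p x) := by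
  induction q with
  | nil => rfl
  | cons q s h1 h0 ih => simp only [SPath.comp, holPath, StarAlgEquiv.trans_apply, ih]

theorem incl_holPath_of_suppLE {a c : K} (ha : a ≤ c) {b : K} (p : SPath K a b)
    (hp : p.SuppLE c) (hb : b ≤ c) (x : N.fib a) :
    N.incl hb (N.holPath hN p x) = N.incl ha x := by
  induction p with
  | nil => rfl
  | cons p s h1 h0 ih =>
      subst h1 h0
      obtain ⟨hp, hs⟩ := hp
      exact (N.incl_hol1 hN s hs _).trans (ih hp (s.le1.trans hs))

theorem holPath_eq_of_suppLE {a b c : K} (ha : a ≤ c) (hb : b ≤ c) {p q : SPath K a b}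
    (hp : p.SuppLE c) (hq : q.SuppLE c) (x : N.fib a) :
    N.holPath hN p x = N.holPath hN q x :=
  N.incl_injective hb ((N.incl_holPath_of_suppLE hN ha p hp hb x).trans
    (N.incl_holPath_of_suppLE hN ha q hq hb x).symm)

theorem holPath_nervePath {a b : K} (h : a ≤ b) (x : N.fib a) :
    N.holPath hN (SPath.nervePath h) x = N.incl h x :=
  (N.incl_self le_rfl _).symm.trans
    (N.incl_holPath_of_suppLE hN h (SPath.nervePath h) ⟨trivial, le_rfl⟩ le_rfl x)

theorem holPath_congr {a b : K} {p q : SPath K a b} (h : SPath.Homotopic p q) (x : N.fib a) :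
    N.holPath hN p x = N.holPath hN q x := by
  induction h with
  | refl => rfl
  | symm _ ih => exact (ih x).symm
  | trans _ _ ih₁ ih₂ => exact (ih₁ x).trans (ih₂ x)
  | comp_congr _ _ ih₁ ih₂ => rw [holPath_comp, holPath_comp, ih₁, ih₂]
  | degen s h0 h1 hs =>
      subst hs
      exact N.holPath_eq_of_suppLE hN (p := .nil _) (c := s.supp) le_rfl le_rfl trivial
        (SPath.suppLE_single s h1 h0 le_rfl) x
  | triangle c h1 h0 =>
      subst h1 h0
      exact N.holPath_eq_of_suppLE hN (c.d2.le1.trans c.le2) (c.d0.le0.trans c.le0)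
        ((SPath.suppLE_single _ _ _ c.le2).comp (SPath.suppLE_single _ _ _ c.le0))
        (SPath.suppLE_single _ _ _ c.le1) x

end CStarNet

theorem isNetMorphismOver_id (N : CStarNet.{u, v} K) :
    IsNetMorphismOver N N fun a => StarAlgHom.id ℂ (N.fib a) :=
  fun _ _ _ _ => rfl

section Morphisms

variable {N : CStarNet.{u, v} K} {M : CStarNet.{u, v'} K}

theorem IsNetMorphismOver.comp {L : CStarNet.{u, w} K} {φ : ∀ a, N.fib a →⋆ₐ[ℂ] M.fib a}
    {ψ : ∀ a, M.fib a →⋆ₐ[ℂ] L.fib a} (hψ : IsNetMorphismOver M L ψ)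
    (hφ : IsNetMorphismOver N M φ) : IsNetMorphismOver N L fun a => (ψ a).comp (φ a) := by
  intro a b h x
  rw [StarAlgHom.comp_apply, StarAlgHom.comp_apply, hφ h, hψ h]

variable (hN : IsCStarNetBundle N) (hM : IsCStarNetBundle M)

/-- `η` is a morphism of the holonomy dynamical systems at `o`. -/
def IsHolonomyEquivariant {o : K} (η : N.fib o →⋆ₐ[ℂ] M.fib o) : Prop :=
  ∀ (p : SPath K o o) (x : N.fib o), η (N.holPath hN p x) = M.holPath hM p (η x)

theorem IsNetMorphismOver.map_hol1 {φ : ∀ a, N.fib a →⋆ₐ[ℂ] M.fib a}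
    (hφ : IsNetMorphismOver N M φ) (s : Simplex1 K) (x : N.fib s.d1) :
    φ s.d0 (N.hol1 hN s x) = M.hol1 hM s (φ s.d1 x) := by
  apply M.incl_injective s.le0
  rw [← hφ s.le0, N.incl_hol1 hN s le_rfl, hφ, ← M.incl_hol1 hM s le_rfl]

theorem IsNetMorphismOver.map_holPath {φ : ∀ a, N.fib a →⋆ₐ[ℂ] M.fib a}
    (hφ : IsNetMorphismOver N M φ) {a b : K} (p : SPath K a b) (x : N.fib a) :
    φ b (N.holPath hN p x) = M.holPath hM p (φ a x) := by
  induction p with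
  | nil => rfl
  | cons p s h1 h0 ih =>
      subst h1 h0
      exact (hφ.map_hol1 hN hM s _).trans (congrArg (M.hol1 hM s) ih)

theorem IsNetMorphismOver.isHolonomyEquivariant {o : K} {φ : ∀ a, N.fib a →⋆ₐ[ℂ] M.fib a}
    (hφ : IsNetMorphismOver N M φ) : IsHolonomyEquivariant hN hM (φ o) :=
  hφ.map_holPath hN hM

def holConj {o a : K} (p : SPath K o a) (η : N.fib o →⋆ₐ[ℂ] M.fib o) :
    N.fib a →⋆ₐ[ℂ] M.fib a :=
  ((M.holPath hM p : M.fib o →⋆ₐ[ℂ] M.fib a).comp η).comp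
    ((N.holPath hN p).symm : N.fib a →⋆ₐ[ℂ] N.fib o)

theorem holConj_holPath {o a : K} (p : SPath K o a) (η : N.fib o →⋆ₐ[ℂ] M.fib o)
    (x : N.fib o) : holConj hN hM p η (N.holPath hN p x) = M.holPath hM p (η x) := by
  simp [holConj]

theorem holConj_nil {o : K} (η : N.fib o →⋆ₐ[ℂ] M.fib o) : holConj hN hM (.nil o) η = η :=
  rfl

theorem holConj_comp_nervePath {o a b : K} (p : SPath K o a) (h : a ≤ b)
    (η : N.fib o →⋆ₐ[ℂ] M.fib o) (x : N.fib a) :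
    holConj hN hM (p.comp (SPath.nervePath h)) η (N.incl h x)
      = M.incl h (holConj hN hM p η x) := by
  obtain ⟨y, rfl⟩ : ∃ y, N.holPath hN p y = x := (N.holPath hN p).surjective x
  rw [← N.holPath_nervePath hN, ← N.holPath_comp hN, holConj_holPath, holConj_holPath,
    M.holPath_comp hM, M.holPath_nervePath hM]

/-- Two paths from `o` to `a` differ by the loop `p * q⁻¹`, on which `η` is equivariant. -/
theorem holConj_eq {o a : K} {η : N.fib o →⋆ₐ[ℂ] M.fib o} (hη : IsHolonomyEquivariant hN hM η)
    (p q : SPath K o a) : holConj hN hM p η = holConj hN hM q η := by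
  ext x
  obtain ⟨y, rfl⟩ : ∃ y, N.holPath hN p y = x := (N.holPath hN p).surjective x
  have hpq := SPath.Homotopic.comp_reverse_comp p q
  calc holConj hN hM p η (N.holPath hN p y)
      = M.holPath hM q (M.holPath hM (p.comp q.reverse) (η y)) := by
        rw [holConj_holPath, ← M.holPath_comp, M.holPath_congr hM hpq]
    _ = holConj hN hM q η (N.holPath hN p y) := by
        rw [← hη, ← holConj_holPath, ← N.holPath_comp, N.holPath_congr hN hpq]

theorem exists_isNetMorphismOver_of_isHolonomyEquivariant {o : K}
    (hconn : ∀ a, Nonempty (SPath K o a)) {η : N.fib o →⋆ₐ[ℂ] M.fib o}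
    (hη : IsHolonomyEquivariant hN hM η) :
    ∃ φ : ∀ a, N.fib a →⋆ₐ[ℂ] M.fib a, IsNetMorphismOver N M φ ∧ φ o = η := by
  refine ⟨fun a => holConj hN hM (hconn a).some η, fun a b h x => ?_, ?_⟩
  · dsimp only
    rw [holConj_eq hN hM hη _ ((hconn a).some.comp (SPath.nervePath h)),
      holConj_comp_nervePath]
  · dsimp only
    rw [holConj_eq hN hM hη _ (.nil o), holConj_nil]

end Morphisms

theorem IsNetMorphismOver.eq_of_eq_at {N : CStarNet.{u, v} K} {M : CStarNet.{u, v'} K}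
    (hN : IsCStarNetBundle N) (hM : IsCStarNetBundle M)
    {o : K} (hconn : ∀ a, Nonempty (SPath K o a))
    {φ ψ : ∀ a, N.fib a →⋆ₐ[ℂ] M.fib a} (hφ : IsNetMorphismOver N M φ)
    (hψ : IsNetMorphismOver N M ψ) (h : φ o = ψ o) (a : K) : φ a = ψ a := by
  obtain ⟨p⟩ := hconn a
  ext x
  obtain ⟨y, rfl⟩ : ∃ y, N.holPath hN p y = x := (N.holPath hN p).surjective x
  rw [hφ.map_holPath hN hM, hψ.map_holPath hN hM, h]

theorem exists_netIso_of_isHolonomyEquivariant {N : CStarNet.{u, v} K}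
    {M : CStarNet.{u, v'} K} (hN : IsCStarNetBundle N) (hM : IsCStarNetBundle M) {o : K}
    (hconn : ∀ a, Nonempty (SPath K o a)) (e : N.fib o ≃⋆ₐ[ℂ] M.fib o)
    (he : IsHolonomyEquivariant hN hM (e : N.fib o →⋆ₐ[ℂ] M.fib o)) :
    ∃ φ : ∀ a, N.fib a ≃⋆ₐ[ℂ] M.fib a,
      (∀ ⦃a b : K⦄ (h : a ≤ b) (x : N.fib a), φ b (N.incl h x) = M.incl h (φ a x)) ∧
        φ o = e := by
  have he' : IsHolonomyEquivariant hM hN (e.symm : M.fib o →⋆ₐ[ℂ] N.fib o) := fun p x => by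
    show e.symm _ = _
    rw [StarAlgEquiv.symm_apply_eq]
    simpa using (he p (e.symm x)).symm
  obtain ⟨φ, hφ, hφo⟩ := exists_isNetMorphismOver_of_isHolonomyEquivariant hN hM hconn he
  obtain ⟨ψ, hψ, hψo⟩ := exists_isNetMorphismOver_of_isHolonomyEquivariant hM hN hconn he'
  have hψφ := (hψ.comp hφ).eq_of_eq_at hN hN hconn (isNetMorphismOver_id N) <| by
    ext x; simp [hφo, hψo]
  have hφψ := (hφ.comp hψ).eq_of_eq_at hM hM hconn (isNetMorphismOver_id M) <| by
    ext x; simp [hφo, hψo]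
  refine ⟨fun a => StarAlgEquiv.ofBijective (φ a) ?_, hφ, ?_⟩
  · exact Function.bijective_iff_has_inverse.2
      ⟨ψ a, DFunLike.congr_fun (hψφ a), DFunLike.congr_fun (hφψ a)⟩
  · ext x
    exact DFunLike.congr_fun hφo x

section ConstantNet

variable {o : K} (γ : ∀ a, SPath K o a)

def loopClass {a b : K} (p : SPath K a b) : Pi1 K o :=
  Pi1.mk (((γ a).comp p).comp (γ b).reverse)

theorem loopClass_congr {a b : K} {p q : SPath K a b} (h : SPath.Homotopic p q) :
    loopClass γ p = loopClass γ q :=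
  Quotient.sound (.comp_congr (.comp_congr (.refl _) h) (.refl _))

theorem loopClass_nil (a : K) : loopClass γ (.nil a) = 1 :=
  Quotient.sound (SPath.comp_reverse_self (γ a))

theorem loopClass_comp {a b c : K} (p : SPath K a b) (q : SPath K b c) :
    loopClass γ (p.comp q) = loopClass γ q * loopClass γ p := by
  refine Quotient.sound (SPath.Homotopic.symm ?_)
  show SPath.Homotopic
    ((((γ a).comp p).comp (γ b).reverse).comp (((γ b).comp q).comp (γ c).reverse))
    (((γ a).comp (p.comp q)).comp (γ c).reverse)
  simp only [SPath.comp_assoc]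
  exact .comp_congr (.refl _) (.comp_congr (.refl _) (.reverse_comp_comp _ _))

theorem loopClass_single (s : Simplex1 K) :
    loopClass γ (.single s rfl rfl)
      = (loopClass γ (SPath.nervePath s.le0))⁻¹ * loopClass γ (SPath.nervePath s.le1) := by
  rw [eq_inv_mul_iff_mul_eq, ← loopClass_comp]
  exact loopClass_congr γ (.single_comp_nervePath s)

theorem loopClass_nervePath_trans {a b c : K} (h₁ : a ≤ b) (h₂ : b ≤ c) :
    loopClass γ (SPath.nervePath (h₁.trans h₂))
      = loopClass γ (SPath.nervePath h₂) * loopClass γ (SPath.nervePath h₁) := by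
  rw [← loopClass_comp]
  exact loopClass_congr γ (SPath.Homotopic.nervePath_comp_nervePath h₁ h₂).symm

theorem mk_mul_loopClass (p : SPath K o o) :
    Pi1.mk (γ o) * loopClass γ p = Pi1.mk p * Pi1.mk (γ o) := by
  show Pi1.mk (γ o) * ((Pi1.mk (γ o))⁻¹ * (Pi1.mk p * Pi1.mk (γ o))) = _
  rw [mul_inv_cancel_left]

variable {R : Type v} [CStarAlgebra R] (ρ : Pi1 K o →* (R ≃⋆ₐ[ℂ] R))

abbrev constNet : CStarNet.{u, v} K where
  fib _ := R
  incl _ _ h := (ρ (loopClass γ (SPath.nervePath h)) : R →⋆ₐ[ℂ] R)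
  incl_injective _ _ h := (ρ _).injective
  incl_comp _ _ _ h₁ h₂ x := by
    show ρ _ (ρ _ x) = ρ _ x
    rw [loopClass_nervePath_trans γ h₁ h₂, map_mul, StarAlgEquiv.mul_apply]

theorem isCStarNetBundle_constNet : IsCStarNetBundle (constNet γ ρ) :=
  fun _ _ _ => (ρ _).bijective

theorem constNet_hol1 (s : Simplex1 K) (x : R) :
    (constNet γ ρ).hol1 (isCStarNetBundle_constNet γ ρ) s x
      = ρ (loopClass γ (.single s rfl rfl)) x := by
  rw [loopClass_single, map_mul, StarAlgEquiv.mul_apply, map_inv, StarAlgEquiv.aut_inv,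
    StarAlgEquiv.eq_symm_apply]
  exact ((constNet γ ρ).holEquiv (isCStarNetBundle_constNet γ ρ) s.le0).apply_symm_apply _

theorem constNet_holPath {a b : K} (p : SPath K a b) (x : R) :
    (constNet γ ρ).holPath (isCStarNetBundle_constNet γ ρ) p x = ρ (loopClass γ p) x := by
  induction p with
  | nil => rw [loopClass_nil, map_one]; rfl
  | cons p s h1 h0 ih =>
      subst h1 h0
      show (constNet γ ρ).hol1 _ s ((constNet γ ρ).holPath _ p x)
        = ρ (loopClass γ (p.comp (.single s rfl rfl))) x
      rw [constNet_hol1, ih, loopClass_comp, map_mul, StarAlgEquiv.mul_apply]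

end ConstantNet

theorem exists_isCStarNetBundle_holonomy_eq {o : K} (γ : ∀ a, SPath K o a) {R : Type v}
    [CStarAlgebra R] (ρ : Pi1 K o →* (R ≃⋆ₐ[ℂ] R)) :
    ∃ (N : CStarNet.{u, v} K) (hN : IsCStarNetBundle N) (e : N.fib o ≃⋆ₐ[ℂ] R),
      ∀ (p : SPath K o o) (x : N.fib o), e (N.holPath hN p x) = ρ (Pi1.mk p) (e x) := by
  refine ⟨constNet γ ρ, isCStarNetBundle_constNet γ ρ, ρ (Pi1.mk (γ o)), fun p x => ?_⟩
  rw [constNet_holPath, ← StarAlgEquiv.mul_apply, ← map_mul, mk_mul_loopClass, map_mul,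
    StarAlgEquiv.mul_apply]

/-- the correspondence sending a C*-net bundle to its holonomy dynamical
system is bijective up to isomorphism, and gives an equivalence between the category of
C*-net bundles over `K` and the category of C*-dynamical systems with group `π₁ᵒ(K)`:
it is essentially surjective, maps morphisms to equivariant morphisms, and is fully
faithful; moreover isomorphisms of holonomy dynamical systems lift to isomorphisms of
net bundles. -/
theorem statement_2 {K : Type u} [PartialOrder K]
    (hconn : ∀ a b : K, Nonempty (SPath K a b)) (o : K) :
    -- essential surjectivity
    (∀ (R : Type v) [CStarAlgebra R] (α : Pi1 K o → (R ≃⋆ₐ[ℂ] R)),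
       (∀ (x y : Pi1 K o) (r : R), α (x * y) r = α x (α y r)) →
       ∃ (N : CStarNet.{u, v} K) (hN : IsCStarNetBundle N) (e : N.fib o ≃⋆ₐ[ℂ] R),
         ∀ (p : SPath K o o) (x : N.fib o), e (N.holPath hN p x) = α (Pi1.mk p) (e x)) ∧
    -- fully faithful on morphisms
    (∀ (N M : CStarNet.{u, v} K) (hN : IsCStarNetBundle N) (hM : IsCStarNetBundle M),
       (∀ (φ : ∀ a, N.fib a →⋆ₐ[ℂ] M.fib a), IsNetMorphismOver N M φ →
          ∀ (p : SPath K o o) (x : N.fib o),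
            φ o (N.holPath hN p x) = M.holPath hM p (φ o x)) ∧
       (∀ (φ ψ : ∀ a, N.fib a →⋆ₐ[ℂ] M.fib a),
          IsNetMorphismOver N M φ → IsNetMorphismOver N M ψ →
          φ o = ψ o → ∀ a, φ a = ψ a) ∧
       (∀ η : N.fib o →⋆ₐ[ℂ] M.fib o,
          (∀ (p : SPath K o o) (x : N.fib o), η (N.holPath hN p x) = M.holPath hM p (η x)) →
          ∃ φ : ∀ a, N.fib a →⋆ₐ[ℂ] M.fib a, IsNetMorphismOver N M φ ∧ φ o = η)) ∧
    -- isomorphic holonomy dynamical systems give isomorphic net bundles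
    (∀ (N M : CStarNet.{u, v} K) (hN : IsCStarNetBundle N) (hM : IsCStarNetBundle M)
       (e : N.fib o ≃⋆ₐ[ℂ] M.fib o),
       (∀ (p : SPath K o o) (x : N.fib o), e (N.holPath hN p x) = M.holPath hM p (e x)) →
       ∃ φ : ∀ a, N.fib a ≃⋆ₐ[ℂ] M.fib a,
         (∀ ⦃a b : K⦄ (h : a ≤ b) (x : N.fib a), φ b (N.incl h x) = M.incl h (φ a x)) ∧
         φ o = e) := by
  refine ⟨fun R _ α hα => ?_, fun N M hN hM => ⟨?_, ?_, ?_⟩, fun N M hN hM e he => ?_⟩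
  · exact exists_isCStarNetBundle_holonomy_eq (fun a => (hconn o a).some)
      (MonoidHom.mk' α fun x y => StarAlgEquiv.ext (hα x y))
  · exact fun φ hφ => hφ.isHolonomyEquivariant hN hM
  · exact fun φ ψ hφ hψ => hφ.eq_of_eq_at hN hM (hconn o) hψ
  · exact fun η hη => exists_isNetMorphismOver_of_isHolonomyEquivariant hN hM (hconn o) hη
  · exact exists_netIso_of_isHolonomyEquivariant hN hM (hconn o) e he

end AQFT
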